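/- Let G = (V, E) be an edge-labeled DAG with labels c : E → ℝ and let (j,k) ∈ E be an edge whose source j is not a source of G. Let G' be obtained by back elimination of (j,k): for every predecessor i of j, the label of edge (i,k) becomes c(i,k) + c(j,k)·c(i,j) if (i,k) ∈ E and otherwise the fill edge (i,k) with label c(j,k)·c(i,j) is inserted; the edge (j,k) is removed; and if j thereby has no remaining outgoing edges, j is removed together with all its incoming edges. Then for every source s and sink t of G, the path sums agree: J_{G'}(s, t) = J_G(s, t). -/

import Mathlib

open scoped Classical

/-- A path from `s` to `t`: a nonempty sequence of consecutive edges, recorded as the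
list of its vertices (at least two of them, consecutive ones related by `R`). -/
def IsPath {α : Type*} (R : α → α → Prop) (s t : α) (p : List α) : Prop :=
  2 ≤ p.length ∧ p.Chain' R ∧ p.head? = some s ∧ p.getLast? = some t

/-- The path sum `J_G(s,t)`: the sum over all paths from `s` to `t` of the product of
the edge labels along the path (an empty sum is `0`). -/
noncomputable def pathSum {α : Type*} (R : α → α → Prop) (c : α → α → ℝ) (s t : α) : ℝ :=
  ∑' p : {p : List α // IsPath R s t p},
    ((p.1.zip p.1.tail).map (fun e => c e.1 e.2)).prod

/-- Adjacency after back elimination of the edge `(j,k)`: for every predecessor `i` of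
`j` the (possibly fill) edge `(i,k)` is inserted, the edge `(j,k)` is removed, and if
`j` thereby has no outgoing edges left, `j` is removed (isolated) together with its
incoming edges. -/
def backAdj {V : Type*} [Fintype V] [DecidableEq V] (A : V → V → Bool) (j k : V) :
    V → V → Bool :=
  fun x y =>
    let A1 : V → V → Bool := fun x y =>
      if x = j ∧ y = k then false else (A x y || (A x j && decide (y = k)))
    if ∀ w, w ≠ k → A j w = false then
      (A1 x y && !decide (x = j) && !decide (y = j))
    else A1 x y

/-- Labels after back elimination of `(j,k)`: for every predecessor `i` of `j` the
label of `(i,k)` becomes `c i k + c j k * c i j` if `(i,k)` was an edge and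
`c j k * c i j` for a fill edge; all other edges keep their labels. -/
noncomputable def backLab {V : Type*} [DecidableEq V] (A : V → V → Bool)
    (c : V → V → ℝ) (j k : V) : V → V → ℝ :=
  fun x y =>
    if y = k ∧ A x j then
      (if A x y then c x y + c j y * c x j else c j y * c x j)
    else c x y

/-!
Path sums are read off the weight matrix `M` of the graph: splitting off the first edge of a
path gives `P = M (1 + P)` for the path-sum matrix `P`, so `1 + P = (1 - M)⁻¹` and column `t` of
`1 + P` is the unique solution `u` of `(1 - M) u = eₜ`.

Back elimination of `(j,k)` replaces `M` by `N = M - W + M W` with `W = c j k • Eⱼₖ`, and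
`1 - N = (1 - M) (1 + W)` with `W² = 0`. Hence `(1 - W) u` solves the system for `N`, and it
differs from `u` only in entry `j`, which is not a source. If `j` is removed as well, the weight
matrix loses only column `j`, where `(1 - W) u` vanishes: row `j` of `M` is then row `j` of `W`,
so entry `j` of `(1 - W) u` equals entry `j` of `(1 - M) u = eₜ`, and `t ≠ j` since `t` is a sink.
-/

open Finset Matrix

theorem Matrix.mul_single_apply {l m n α : Type*} [Fintype m] [DecidableEq m] [DecidableEq n]
    [NonUnitalNonAssocSemiring α] (M : Matrix l m α) (i : m) (j : n) (c : α) (a : l) (b : n) :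
    (M * single i j c) a b = if b = j then M a i * c else 0 := by
  split_ifs with h
  · subst h; exact mul_single_apply_same c i b a M
  · exact mul_single_apply_of_ne c i j a b h M

theorem one_sub_sub_add_mul_mul_one_sub {R : Type*} [Ring R] (m w : R) (hw : w * w = 0) :
    (1 - (m - w + m * w)) * (1 - w) = 1 - m :=
  calc (1 - (m - w + m * w)) * (1 - w) = (1 - m) * (1 - w * w) := by noncomm_ring
    _ = 1 - m := by rw [hw, sub_zero, mul_one]

section PathSums

variable {V : Type*} {R : V → V → Prop} {c : V → V → ℝ} {f : V → ℕ} {s t : V}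

noncomputable def pathWeight (c : V → V → ℝ) (p : List V) : ℝ :=
  ((p.zip p.tail).map fun e => c e.1 e.2).prod

@[simp] lemma pathWeight_singleton (a : V) : pathWeight c [a] = 1 := rfl

@[simp] lemma pathWeight_cons_cons (a b : V) (q : List V) :
    pathWeight c (a :: b :: q) = c a b * pathWeight c (b :: q) := by
  simp [pathWeight]

lemma isPath_iff {p : List V} :
    IsPath R s t p ↔ 2 ≤ p.length ∧ p.IsChain R ∧ p.head? = some s ∧ p.getLast? = some t :=
  Iff.rfl

lemma isPath_cons_iff {a : V} {q : List V} :
    IsPath R s t (a :: q) ↔ a = s ∧ ∃ v, R s v ∧ (IsPath R v t q ∨ v = t ∧ q = [t]) := by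
  rcases q with _ | ⟨b, _ | ⟨d, q⟩⟩
  · simp [isPath_iff]
  · simp [isPath_iff]
    grind
  · simp [isPath_iff, List.getLast?_cons_cons]
    grind

lemma IsPath.head?_eq {p : List V} (hp : IsPath R s t p) : p.head? = some s := hp.2.2.1

lemma IsPath.nodup (hR : ∀ a b, R a b → f a < f b) {p : List V} (hp : IsPath R s t p) :
    p.Nodup :=
  (List.isChain_iff_pairwise.mp (hp.2.1.imp fun a b h => hR a b h)).imp
    fun h => ne_of_apply_ne f h.ne

lemma finite_setOf_isPath [Finite V] (hR : ∀ a b, R a b → f a < f b) (s t : V) :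
    {p | IsPath R s t p}.Finite := by
  have := Fintype.ofFinite V
  exact (List.finite_length_le V (Fintype.card V)).subset fun p hp =>
    (IsPath.nodup hR hp).length_le_card

lemma pathSum_eq_finset_sum [Finite V] (hR : ∀ a b, R a b → f a < f b) (s t : V) :
    pathSum R c s t = ∑ p ∈ (finite_setOf_isPath hR s t).toFinset, pathWeight c p := by
  change ∑' p : {p | IsPath R s t p}, pathWeight c p = _
  rw [_root_.tsum_subtype, tsum_eq_sum (s := (finite_setOf_isPath hR s t).toFinset)]
  · exact sum_congr rfl fun p hp => Set.indicator_of_mem (by simpa using hp) _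
  · exact fun p hp => Set.indicator_of_notMem (by simpa using hp) _

variable [Fintype V] [DecidableEq V]

noncomputable def weightMatrix (R : V → V → Prop) (c : V → V → ℝ) : Matrix V V ℝ :=
  Matrix.of fun x y => if R x y then c x y else 0

noncomputable def pathSumMatrix (R : V → V → Prop) (c : V → V → ℝ) : Matrix V V ℝ :=
  Matrix.of (pathSum R c)

theorem pathSum_eq_sum_weightMatrix_mul (hR : ∀ a b, R a b → f a < f b) (s t : V) :
    pathSum R c s t = ∑ v, weightMatrix R c s v * ((1 : Matrix V V ℝ) v t + pathSum R c v t) := by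
  let walks v := (finite_setOf_isPath hR v t).toFinset ∪ if v = t then {[t]} else ∅
  have mem_walks : ∀ v q, q ∈ walks v ↔ IsPath R v t q ∨ v = t ∧ q = [t] := by
    intro v q
    by_cases hv : v = t <;> simp [walks, hv, or_comm]
  have head_of_mem_walks : ∀ v, ∀ q ∈ walks v, q.head? = some v := by
    intro v q hq
    rcases (mem_walks v q).1 hq with hq | ⟨rfl, rfl⟩
    exacts [IsPath.head?_eq hq, rfl]
  have sum_walks : ∀ v, ∑ q ∈ walks v, pathWeight c q
      = (1 : Matrix V V ℝ) v t + pathSum R c v t := by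
    intro v
    rw [sum_union, pathSum_eq_finset_sum hR, one_apply, add_comm]
    · split_ifs <;> simp
    · split_ifs <;> simp [isPath_iff]
  have paths_eq : (finite_setOf_isPath hR s t).toFinset
      = (univ.filter (R s)).biUnion fun v => (walks v).image (List.cons s) := by
    ext p
    rcases p with _ | ⟨a, q⟩
    · simp [isPath_iff]
    · simp only [Set.Finite.mem_toFinset, Set.mem_ofPred_eq, isPath_cons_iff, mem_biUnion,
        mem_filter, mem_univ, true_and, mem_image, mem_walks, List.cons.injEq]
      aesop
  rw [pathSum_eq_finset_sum hR, paths_eq, sum_biUnion, sum_filter]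
  · refine sum_congr rfl fun v _ => ?_
    rw [sum_image (fun _ _ _ _ h => List.cons_injective h), weightMatrix, of_apply]
    split_ifs with hsv
    · rw [← sum_walks, mul_sum]
      refine sum_congr rfl fun q hq => ?_
      obtain ⟨q, rfl⟩ : ∃ q', q = v :: q' := by
        have := head_of_mem_walks v q hq
        rcases q with _ | ⟨b, q⟩ <;> simp_all
      exact pathWeight_cons_cons s v q
    · simp
  · intro v _ w _ hvw
    simp only [Function.onFun, disjoint_left, mem_image]
    rintro _ ⟨q, hq, rfl⟩ ⟨q', hq', hqq'⟩
    have := head_of_mem_walks w q' hq'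
    rw [List.cons_injective hqq', head_of_mem_walks v q hq] at this
    exact hvw (Option.some_injective _ this)

theorem weightMatrix_mul_one_add_pathSumMatrix (hR : ∀ a b, R a b → f a < f b) :
    weightMatrix R c * (1 + pathSumMatrix R c) = pathSumMatrix R c := by
  ext s t
  simp [mul_apply, pathSumMatrix, pathSum_eq_sum_weightMatrix_mul hR s t]

theorem one_sub_weightMatrix_mul_one_add_pathSumMatrix (hR : ∀ a b, R a b → f a < f b) :
    (1 - weightMatrix R c) * (1 + pathSumMatrix R c) = 1 := by
  rw [sub_mul, one_mul, weightMatrix_mul_one_add_pathSumMatrix hR]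
  abel

theorem one_sub_weightMatrix_mulVec_col (hR : ∀ a b, R a b → f a < f b) (t : V) :
    (1 - weightMatrix R c) *ᵥ (1 + pathSumMatrix R c).col t = Pi.single t 1 := by
  rw [← mulVec_single_one, mulVec_mulVec, one_sub_weightMatrix_mul_one_add_pathSumMatrix hR,
    one_mulVec]

theorem one_add_pathSumMatrix_apply_eq_of_mulVec (hR : ∀ a b, R a b → f a < f b) {u : V → ℝ}
    (hu : (1 - weightMatrix R c) *ᵥ u = Pi.single t 1) (s : V) :
    (1 + pathSumMatrix R c) s t = u s := by
  have := congrArg ((1 + pathSumMatrix R c) *ᵥ ·) hu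
  simp only [mulVec_mulVec, mulVec_single_one, one_mulVec,
    mul_eq_one_comm.mp (one_sub_weightMatrix_mul_one_add_pathSumMatrix hR)] at this
  exact congrFun this.symm s

end PathSums

section BackElimination

variable {V : Type*} [Fintype V] [DecidableEq V] {A : V → V → Bool} {c : V → V → ℝ} {j k : V}

lemma backAdj_eq_true_iff (x y : V) :
    backAdj A j k x y = true ↔ ((∀ w, w ≠ k → A j w = false) → x ≠ j ∧ y ≠ j) ∧
      ¬(x = j ∧ y = k) ∧ (A x y = true ∨ A x j = true ∧ y = k) := by
  unfold backAdj
  split_ifs <;> simp_all <;> tauto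

lemma weightMatrix_backAdj_apply (hjk : A j k = true) (hjj : A j j = false) (x y : V) :
    weightMatrix (fun a b => backAdj A j k a b = true) (backLab A c j k) x y =
      if (∀ w, w ≠ k → A j w = false) ∧ y = j then 0
      else (weightMatrix (fun a b => A a b = true) c - single j k (c j k)
        + weightMatrix (fun a b => A a b = true) c * single j k (c j k)) x y := by
  have hkj : k ≠ j := by rintro rfl; simp_all
  rw [Matrix.add_apply, Matrix.sub_apply, single_apply, Matrix.mul_single_apply]
  simp only [weightMatrix, of_apply, backAdj_eq_true_iff, backLab]
  by_cases hyk : y = k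
  · subst y
    by_cases hxj : x = j
    · subst x; simp [hjk, hjj, hkj]
    · rcases Bool.eq_false_or_eq_true (A x k) with h1 | h1 <;>
      rcases Bool.eq_false_or_eq_true (A x j) with h2 | h2 <;>
      simp [hxj, Ne.symm hxj, hkj, h1, h2] <;> ring
  · by_cases hiso : ∀ w, w ≠ k → A j w = false
    · simp only [eq_true hiso, true_implies, true_and]
      by_cases hxj : x = j
      · subst x; simp [hyk, hiso y hyk, Ne.symm hyk]
      · by_cases hyj : y = j <;> simp [hxj, hyk, hyj, Ne.symm hxj, Ne.symm hyk]
    · simp [eq_false hiso, hyk, Ne.symm hyk]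

lemma lt_of_backAdj {f : V → ℕ} (hacyc : ∀ a b, A a b = true → f a < f b) (hjk : A j k = true)
    (x y : V) (h : backAdj A j k x y = true) : f x < f y := by
  rw [backAdj_eq_true_iff] at h
  obtain ⟨-, -, hxy | ⟨hxj, hyk⟩⟩ := h
  exacts [hacyc x y hxy, hyk ▸ (hacyc x j hxj).trans (hacyc j k hjk)]

theorem one_sub_weightMatrix_backAdj_mulVec (hjk : A j k = true) (hjj : A j j = false) {t : V}
    (htj : t ≠ j) {q : V → ℝ}
    (hq : (1 - weightMatrix (fun a b => A a b = true) c) *ᵥ q = Pi.single t 1) :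
    (1 - weightMatrix (fun a b => backAdj A j k a b = true) (backLab A c j k)) *ᵥ
      ((1 - single j k (c j k)) *ᵥ q) = Pi.single t 1 := by
  set M := weightMatrix (fun a b => A a b = true) c
  set W : Matrix V V ℝ := single j k (c j k)
  have hkj : k ≠ j := by rintro rfl; simp_all
  have hN : (1 - (M - W + M * W)) *ᵥ ((1 - W) *ᵥ q) = Pi.single t 1 := by
    rw [mulVec_mulVec, one_sub_sub_add_mul_mul_one_sub M W (single_mul_single_of_ne _ _ _ _ hkj _),
      hq]
  have hvanish : (∀ w, w ≠ k → A j w = false) → ((1 - W) *ᵥ q) j = 0 := by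
    intro hiso
    have hMW : ∀ v, M j v = W j v := by
      intro v
      by_cases hvk : v = k
      · subst v; simp [M, W, weightMatrix, hjk]
      · simp [M, W, weightMatrix, hiso v hvk, Ne.symm hvk]
    calc ((1 - W) *ᵥ q) j = ((1 - M) *ᵥ q) j := by
          simp [mulVec, dotProduct, Matrix.sub_apply, hMW]
      _ = 0 := by rw [hq, Pi.single_eq_of_ne htj.symm]
  have hM'N : weightMatrix (fun a b => backAdj A j k a b = true) (backLab A c j k) *ᵥ
      ((1 - W) *ᵥ q) = (M - W + M * W) *ᵥ ((1 - W) *ᵥ q) := by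
    ext x
    refine sum_congr rfl fun v _ => ?_
    dsimp only
    rw [weightMatrix_backAdj_apply hjk hjj]
    split_ifs with h
    · rw [h.2, hvanish h.1, mul_zero, mul_zero]
    · rfl
  rw [sub_mulVec, hM'N, ← sub_mulVec, hN]

end BackElimination

/-- **Back edge elimination preserves source-to-sink path sums**: if `(j,k)` is an
edge of the edge-labeled dag `G` whose source `j` is not a source of `G`, then for
every source `s` and sink `t` of `G`, `J_{G'}(s,t) = J_G(s,t)` where `G'` is obtained
from `G` by back elimination of `(j,k)`. -/
theorem back_elimination_preserves_path_sums
    {V : Type*} [Fintype V] [DecidableEq V]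
    (A : V → V → Bool) (c : V → V → ℝ)
    (f : V → ℕ) (hacyc : ∀ a b, A a b = true → f a < f b)
    (j k : V) (hjk : A j k = true) (hnotsource : ∃ i, A i j = true) :
    ∀ s t : V, (∀ u, A u s = false) → (∀ w, A t w = false) →
      pathSum (fun a b => backAdj A j k a b = true) (backLab A c j k) s t
        = pathSum (fun a b => A a b = true) c s t := by
  intro s t hs ht
  obtain ⟨i, hij⟩ := hnotsource
  have hsj : s ≠ j := by rintro rfl; simp [hs i] at hij
  have htj : t ≠ j := by rintro rfl; simp [ht k] at hjk
  have hjj : A j j = false := Bool.eq_false_iff.2 fun h => (hacyc j j h).false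
  have hcol := one_sub_weightMatrix_mulVec_col (c := c) hacyc t
  have h := one_add_pathSumMatrix_apply_eq_of_mulVec (lt_of_backAdj hacyc hjk)
    (one_sub_weightMatrix_backAdj_mulVec hjk hjj htj hcol) s
  simpa [sub_mulVec, single_mulVec, hsj, pathSumMatrix] using h
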